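/- arXiv:2309.01863 — 2 statements merged into one kernel-verified Lean document; each statement's English description precedes it below -/
import Mathlib

section
/- Let A be a real symmetric 3×3 matrix with trace zero and A ≠ 0. Define the mode μ(A) = 3√6 · det(A)/‖A‖³, where ‖A‖ is the Frobenius norm. Then −1 ≤ μ(A) ≤ 1. -/
/-- The Frobenius norm of a 3×3 real matrix. -/
noncomputable def frobeniusNorm3 (A : Matrix (Fin 3) (Fin 3) ℝ) : ℝ :=
  Real.sqrt (∑ i, ∑ j, (A i j) ^ 2)

/-- The mode of a traceless symmetric tensor: `μ(A) = 3√6 · det A / ‖A‖³`. -/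
noncomputable def tensorMode (A : Matrix (Fin 3) (Fin 3) ℝ) : ℝ :=
  3 * Real.sqrt 6 * A.det / (frobeniusNorm3 A) ^ 3

/-!
In an orthonormal eigenbasis of `A`, with eigenvalues `x, y, z`, we have `x + y + z = 0`,
`det A = x y z` and `‖A‖² = x² + y² + z²`. Eliminating `z = -x - y`,
`‖A‖⁶ - 54 (det A)² = 2 ((x - y)(2x + y)(x + 2y))²`, which is the discriminant of the
characteristic polynomial of `A` up to a positive factor. Hence `μ(A)² ≤ 1`.
-/

open Matrix Unitary

theorem Matrix.IsHermitian.trace_mul_self_eq_sum_sq_eigenvalues {𝕜 n : Type*} [RCLike 𝕜]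
    [Fintype n] [DecidableEq n] {A : Matrix n n 𝕜} (hA : A.IsHermitian) :
    (A * A).trace = ∑ i, (hA.eigenvalues i : 𝕜) ^ 2 := by
  have trace_conj (X : Matrix n n 𝕜) :
      (conjStarAlgAut 𝕜 _ (star hA.eigenvectorUnitary) X).trace = X.trace := by
    rw [conjStarAlgAut_apply, trace_mul_cycle, Unitary.coe_star_mul_self, one_mul]
  rw [← trace_conj, map_mul, hA.conjStarAlgAut_star_eigenvectorUnitary, diagonal_mul_diagonal,
    trace_diagonal]
  simp [sq]

theorem Matrix.IsSymm.sum_sq_apply_eq_trace_mul_self {R n : Type*} [CommSemiring R] [Fintype n]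
    {A : Matrix n n R} (hA : A.IsSymm) :
    ∑ i, ∑ j, A i j ^ 2 = (A * A).trace := by
  simp only [trace, diag_apply, mul_apply, sq]
  refine Finset.sum_congr rfl fun i _ => Finset.sum_congr rfl fun j _ => ?_
  rw [hA.apply i j]

theorem fiftyFour_mul_sq_mul_mul_le_of_add_add_eq_zero {x y z : ℝ} (h : x + y + z = 0) :
    54 * (x * y * z) ^ 2 ≤ (x ^ 2 + y ^ 2 + z ^ 2) ^ 3 := by
  obtain rfl : z = -x - y := by linarith
  have discriminant : (x ^ 2 + y ^ 2 + (-x - y) ^ 2) ^ 3 - 54 * (x * y * (-x - y)) ^ 2 =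
      2 * ((x - y) * (2 * x + y) * (x + 2 * y)) ^ 2 := by ring
  linarith [discriminant, sq_nonneg ((x - y) * (2 * x + y) * (x + 2 * y))]

theorem abs_three_mul_sqrt_six_mul_div_sqrt_pow_three_le_one {d s : ℝ}
    (h : 54 * d ^ 2 ≤ s ^ 3) : |3 * √6 * d / √s ^ 3| ≤ 1 := by
  have hs : 0 ≤ s := (Odd.pow_nonneg_iff (n := 3) (by decide)).mp (by nlinarith [sq_nonneg d])
  rw [abs_div]
  refine div_le_one_of_le₀ ?_ (abs_nonneg _)
  rw [← sq_le_sq]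
  calc (3 * √6 * d) ^ 2 = 54 * d ^ 2 := by
        rw [mul_pow, mul_pow, Real.sq_sqrt (by norm_num : (0 : ℝ) ≤ 6)]; ring
    _ ≤ s ^ 3 := h
    _ = (√s ^ 3) ^ 2 := by rw [← pow_mul, mul_comm, pow_mul, Real.sq_sqrt hs]

theorem mode_bounds_general (A : Matrix (Fin 3) (Fin 3) ℝ)
    (hs : A.IsSymm) (ht : A.trace = 0) :
    -1 ≤ tensorMode A ∧ tensorMode A ≤ 1 := by
  have hA : A.IsHermitian := isHermitian_iff_isSymm.mpr hs
  set x := hA.eigenvalues 0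
  set y := hA.eigenvalues 1
  set z := hA.eigenvalues 2
  have htrace : x + y + z = 0 := by
    simpa [Fin.sum_univ_three, ht] using hA.trace_eq_sum_eigenvalues.symm
  have hdet : A.det = x * y * z := by
    simpa [Fin.prod_univ_three] using hA.det_eq_prod_eigenvalues
  have hnorm : ∑ i, ∑ j, A i j ^ 2 = x ^ 2 + y ^ 2 + z ^ 2 := by
    simpa [Fin.sum_univ_three, add_assoc] using
      hs.sum_sq_apply_eq_trace_mul_self.trans hA.trace_mul_self_eq_sum_sq_eigenvalues
  have hmode : |tensorMode A| ≤ 1 := abs_three_mul_sqrt_six_mul_div_sqrt_pow_three_le_one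
    (by rw [hdet, hnorm]; exact fiftyFour_mul_sq_mul_mul_le_of_add_add_eq_zero htrace)
  exact abs_le.mp hmode

/-- For a nonzero real symmetric traceless 3×3 matrix `A`,
the mode satisfies `−1 ≤ μ(A) ≤ 1`. -/
theorem mode_bounds (A : Matrix (Fin 3) (Fin 3) ℝ)
    (hs : A.IsSymm) (ht : A.trace = 0) (hne : A ≠ 0) :
    -1 ≤ tensorMode A ∧ tensorMode A ≤ 1 :=
  mode_bounds_general A hs ht
end

section
/- Let A be a real symmetric 3×3 matrix with trace zero, A ≠ 0, and eigenvalues λ₁ ≥ λ₂ ≥ λ₃. Then μ(A) = 1 (where μ(A) = 3√6·det(A)/‖A‖³) if and only if λ₂ = λ₃ (the two smaller eigenvalues are equal and A is not zero). -/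
/-!
By the spectral theorem, `det A`, `tr A` and `‖A‖²` are `λ₁λ₂λ₃`, `λ₁ + λ₂ + λ₃` and
`λ₁² + λ₂² + λ₃²`. For a traceless triple, `(Σ λᵢ²)³ - 54 (λ₁λ₂λ₃)²` is twice the discriminant
`∏ (λᵢ - λⱼ)²`, so `μ(A) = 1` exactly when the discriminant vanishes and `λ₁λ₂λ₃ ≥ 0`. A double
eigenvalue `λ₁ = λ₂ ≥ 0` gives `λ₁λ₂λ₃ = -2λ₁³ ≤ 0`, which leaves `λ₂ = λ₃`.
-/

namespace Matrix

variable {n : Type*} [Fintype n]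

theorem IsHermitian.trace_mul_self_eq_sum_sq_eigenvalues_s3 [DecidableEq n] {𝕜 : Type*} [RCLike 𝕜]
    {A : Matrix n n 𝕜} (hA : A.IsHermitian) :
    (A * A).trace = ∑ i, (hA.eigenvalues i : 𝕜) ^ 2 := by
  conv_lhs => rw [hA.spectral_theorem, ← map_mul, Unitary.conjStarAlgAut_apply, trace_mul_cycle,
    Unitary.coe_star_mul_self, one_mul, diagonal_mul_diagonal, trace_diagonal]
  simp [sq]

theorem IsSymm.sum_sq_entries_eq_sum_sq_roots_charpoly [DecidableEq n] {A : Matrix n n ℝ}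
    (hA : A.IsSymm) : ∑ i, ∑ j, A i j ^ 2 = (A.charpoly.roots.map (· ^ 2)).sum := by
  have hH : A.IsHermitian := isHermitian_iff_isSymm.mpr hA
  calc ∑ i, ∑ j, A i j ^ 2 = (A * A).trace := by
        simp only [trace, diag_apply, mul_apply, sq, hA.apply]
    _ = ∑ i, hH.eigenvalues i ^ 2 := by simpa using hH.trace_mul_self_eq_sum_sq_eigenvalues_s3
    _ = (A.charpoly.roots.map (· ^ 2)).sum := by
        simp [hH.roots_charpoly_eq_eigenvalues, Multiset.map_map]

theorem sum_sq_entries_pos_iff {m : Type*} [Fintype m] {A : Matrix m n ℝ} :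
    0 < ∑ i, ∑ j, A i j ^ 2 ↔ A ≠ 0 := by
  have hnonneg : 0 ≤ ∑ i, ∑ j, A i j ^ 2 := by positivity
  rw [hnonneg.lt_iff_ne', Ne, Ne, not_iff_not, ← Matrix.ext_iff]
  simp [Finset.sum_eq_zero_iff_of_nonneg, Finset.sum_nonneg, sq_nonneg]

end Matrix

theorem sqrt_pow_three_eq_iff {x y : ℝ} (hy : 0 ≤ y) : √y ^ 3 = x ↔ 0 ≤ x ∧ x ^ 2 = y ^ 3 := by
  have hsq : (√y ^ 3) ^ 2 = y ^ 3 := by rw [← pow_mul, mul_comm, pow_mul, Real.sq_sqrt hy]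
  constructor
  · rintro rfl
    exact ⟨by positivity, hsq⟩
  · rintro ⟨hx, hxy⟩
    rwa [← pow_left_inj₀ (by positivity) hx two_ne_zero, hxy]

theorem sum_sq_cube_sub_mul_sq_eq_of_add_eq_zero {a b c : ℝ} (hsum : a + b + c = 0) :
    (a ^ 2 + b ^ 2 + c ^ 2) ^ 3 - 54 * (a * b * c) ^ 2 = 2 * ((a - b) * (b - c) * (a - c)) ^ 2 := by
  obtain rfl : c = -a - b := by linarith
  ring

theorem nonneg_prod_and_discr_eq_zero_iff {a b c : ℝ} (hsum : a + b + c = 0) (hba : b ≤ a)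
    (hcb : c ≤ b) : 0 ≤ a * b * c ∧ (a - b) * (b - c) * (a - c) = 0 ↔ b = c := by
  constructor
  · rintro ⟨hprod, hdiscr⟩
    rcases mul_eq_zero.mp hdiscr with hdiscr | hac
    · rcases mul_eq_zero.mp hdiscr with hab | hbc
      · obtain rfl : b = a := by linarith
        obtain rfl : c = -2 * b := by linarith
        have : b ≤ 0 := by
          by_contra! hb
          nlinarith [mul_pos (mul_pos hb hb) hb]
        linarith
      · linarith
    · linarith
  · rintro rfl
    obtain rfl : a = -2 * b := by linarith
    refine ⟨?_, by ring⟩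
    nlinarith [sq_nonneg b]

theorem three_mul_sqrt_six_mul_prod_div_eq_one_iff {a b c : ℝ} (hsum : a + b + c = 0)
    (hba : b ≤ a) (hcb : c ≤ b) (hpos : 0 < a ^ 2 + b ^ 2 + c ^ 2) :
    3 * √6 * (a * b * c) / √(a ^ 2 + b ^ 2 + c ^ 2) ^ 3 = 1 ↔ b = c := by
  have hsq : (3 * √6 * (a * b * c)) ^ 2 = 54 * (a * b * c) ^ 2 := by
    rw [mul_pow, mul_pow, Real.sq_sqrt (by norm_num)]
    ring
  rw [div_eq_one_iff_eq (by positivity), eq_comm, sqrt_pow_three_eq_iff hpos.le,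
    ← nonneg_prod_and_discr_eq_zero_iff hsum hba hcb]
  refine and_congr (mul_nonneg_iff_of_pos_left (by positivity)) ?_
  rw [hsq, ← sub_eq_zero, ← neg_eq_zero, neg_sub, sum_sq_cube_sub_mul_sq_eq_of_add_eq_zero hsum]
  simp

open Polynomial in
/-- For a nonzero real symmetric traceless 3×3 matrix `A` with
eigenvalues `l₁ ≥ l₂ ≥ l₃`, we have `μ(A) = 1` iff `l₂ = l₃`. -/
theorem mode_eq_one_iff_repeated_smaller_eigenvalues
    (A : Matrix (Fin 3) (Fin 3) ℝ)
    (hs : A.IsSymm) (ht : A.trace = 0) (hne : A ≠ 0)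
    (l₁ l₂ l₃ : ℝ)
    (hchar : A.charpoly = (X - C l₁) * (X - C l₂) * (X - C l₃))
    (h12 : l₂ ≤ l₁) (h23 : l₃ ≤ l₂) :
    tensorMode A = 1 ↔ l₂ = l₃ := by
  have hroots : A.charpoly.roots = {l₁, l₂, l₃} := by
    rw [hchar]
    simp [roots_mul, X_sub_C_ne_zero]
  have hsplits : A.charpoly.Splits := (Matrix.isHermitian_iff_isSymm.mpr hs).splits_charpoly
  have hsum : l₁ + l₂ + l₃ = 0 := by
    simpa [Matrix.trace_eq_sum_roots_charpoly_of_splits hsplits, hroots, add_assoc] using ht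
  have hdet : A.det = l₁ * l₂ * l₃ := by
    simp [Matrix.det_eq_prod_roots_charpoly_of_splits hsplits, hroots, mul_assoc]
  have hsq : ∑ i, ∑ j, A i j ^ 2 = l₁ ^ 2 + l₂ ^ 2 + l₃ ^ 2 := by
    simp [hs.sum_sq_entries_eq_sum_sq_roots_charpoly, hroots, add_assoc]
  have hpos : 0 < l₁ ^ 2 + l₂ ^ 2 + l₃ ^ 2 := hsq ▸ Matrix.sum_sq_entries_pos_iff.mpr hne
  rw [tensorMode, frobeniusNorm3, hsq, hdet]
  exact three_mul_sqrt_six_mul_prod_div_eq_one_iff hsum h12 h23 hpos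
end
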